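/- arXiv:2411.13967 — 4 statements merged into one kernel-verified Lean document; each statement's English description precedes it below -/
import Mathlib

section
/- Let n ≥ 2, fix T = (j_1,…,j_{n−1}) ∈ {1,…,n}^{n−1}, and let A be any C×C minor of the integer matrix M_T. Then |A| ≤ C! · ∏_{i=1}^{n−1} binom(i+n−2, n−2)^{binom(d−i+n−2, n−2)}, where d = (n²−3n+4)/2 and C = binom((n²−n)/2, n−2). -/
open Polynomial MvPolynomial

/-- `f` is a Casas–Alvero polynomial of degree `n`: it is monic of degree `n` and for each
`i ∈ {1, …, n-1}` it has a nonconstant common factor with its `i`-th Hasse derivative. -/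
def IsCasasAlvero {K : Type} [Field K] (n : ℕ) (f : K[X]) : Prop :=
  f.Monic ∧ f.natDegree = n ∧
    ∀ i ∈ Finset.Ioo 0 n,
      ∃ g : K[X], 0 < g.degree ∧ g ∣ f ∧ g ∣ Polynomial.hasseDeriv i f

/-- `p` is a bad prime for `n`: `p` is prime and there are an algebraically closed field `K` of
characteristic `p` and a Casas–Alvero polynomial of degree `n` over `K` which is not an `n`-th
power of a linear polynomial. -/
def IsBadPrime (n p : ℕ) : Prop :=
  p.Prime ∧ ∃ (K : Type) (_ : Field K), IsAlgClosed K ∧ CharP K p ∧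
    ∃ f : K[X], IsCasasAlvero n f ∧ ¬ ∃ b : K, f = (Polynomial.X - Polynomial.C b) ^ n

/-- The involution `Φ_j` on `K[x_1,…,x_m]`, sending `x_i ↦ x_i - x_j` for `i ≠ j` and
`x_j ↦ -x_j`. -/
noncomputable def Phi (K : Type) [CommRing K] {m : ℕ} (j : Fin m) :
    MvPolynomial (Fin m) K →ₐ[K] MvPolynomial (Fin m) K :=
  MvPolynomial.aeval fun i =>
    if i = j then -MvPolynomial.X j else MvPolynomial.X i - MvPolynomial.X j

/-- `Φ_j` for `j ∈ {1,…,n}` acting on `K[x_1,…,x_{n-1}]`; for `j = n` (the last index of `Fin n`)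
this is the identity. -/
noncomputable def PhiFull (K : Type) [CommRing K] (n : ℕ) (j : Fin n) :
    MvPolynomial (Fin (n - 1)) K →ₐ[K] MvPolynomial (Fin (n - 1)) K :=
  if h : (j : ℕ) < n - 1 then Phi K ⟨j, h⟩ else AlgHom.id K _

/-- `G_{T,i} = Φ_{j_i}(σ_i)`, where `i` ranges over `Fin (n-1)` (representing the degree `i+1`). -/
noncomputable def G (K : Type) [CommRing K] (n : ℕ) (T : Fin (n - 1) → Fin n)
    (i : Fin (n - 1)) : MvPolynomial (Fin (n - 1)) K :=
  PhiFull K n (T i) (MvPolynomial.esymm (Fin (n - 1)) K ((i : ℕ) + 1))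

/-- `d = (n² - 3n + 4)/2`. -/
def casasD (n : ℕ) : ℕ := (n ^ 2 - 3 * n + 4) / 2

/-- `C = binom((n²-n)/2, n-2)`, the number of monomials of degree `d` in `n-1` variables. -/
def casasC (n : ℕ) : ℕ := Nat.choose ((n ^ 2 - n) / 2) (n - 2)

/-- `D = Σ_{i=1}^{n-1} binom(d-i+n-2, n-2)`, the number of rows of `M_T`. -/
def casasDD (n : ℕ) : ℕ :=
  ∑ i ∈ Finset.Icc 1 (n - 1), Nat.choose (casasD n - i + n - 2) (n - 2)

/-- The matrix `M_T` over `ℤ`, whose rows, indexed by pairs `(i, α)` with `|α| = d - i`, are the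
coefficient vectors of `x^α · G_{T,i}` with respect to the monomials of degree `d`
(a monomial of degree `e` in `n-1` variables is encoded as an element of `Sym (Fin (n-1)) e`). -/
noncomputable def casasM (n : ℕ) (T : Fin (n - 1) → Fin n) :
    Matrix ((i : Fin (n - 1)) × Sym (Fin (n - 1)) (casasD n - ((i : ℕ) + 1)))
      (Sym (Fin (n - 1)) (casasD n)) ℤ :=
  fun r c =>
    MvPolynomial.coeff (Multiset.toFinsupp (c : Multiset (Fin (n - 1))))
      (MvPolynomial.monomial (Multiset.toFinsupp (r.2 : Multiset (Fin (n - 1)))) 1 * G ℤ n T r.1)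

/-- `J_T`: the greatest common divisor of all `C × C` minors of `M_T`. -/
noncomputable def casasJ (n : ℕ) (T : Fin (n - 1) → Fin n) : ℤ :=
  Finset.gcd (Finset.univ.filter fun
      f : Sym (Fin (n - 1)) (casasD n) →
        (i : Fin (n - 1)) × Sym (Fin (n - 1)) (casasD n - ((i : ℕ) + 1)) =>
      Function.Injective f)
    fun f => ((casasM n T).submatrix f id).det

/-- The upper bound `C! · ∏_{i=1}^{n-1} binom(i+n-2, n-2)^binom(d-i+n-2, n-2)`. -/
def casasBound (n : ℕ) : ℕ :=
  (casasC n).factorial * ∏ i ∈ Finset.Icc 1 (n - 1),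
    Nat.choose (i + n - 2) (n - 2) ^ Nat.choose (casasD n - i + n - 2) (n - 2)


section AuxLemmas
open Finset

lemma natAbs_sum_le' {ι : Type*} (s : Finset ι) (f : ι → ℤ) :
    (∑ i ∈ s, f i).natAbs ≤ ∑ i ∈ s, (f i).natAbs := by
  induction s using Finset.cons_induction with
  | empty => simp
  | cons a s ha ih =>
      simp only [Finset.sum_cons]
      exact (Int.natAbs_add_le _ _).trans (Nat.add_le_add_left ih _)

lemma natAbs_prod' {ι : Type*} (s : Finset ι) (f : ι → ℤ) :
    (∏ i ∈ s, f i).natAbs = ∏ i ∈ s, (f i).natAbs := by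
  induction s using Finset.cons_induction with
  | empty => simp
  | cons a s ha ih => simp [Finset.prod_cons, Int.natAbs_mul, ih]

/-- Coefficients of products of the linear forms occurring in `Φ_j` are in `{-1,0,1}`,
and are supported on variables in `S ∪ {j}`. -/
lemma coeff_prod_phi {m : ℕ} (j : Fin m) (S : Finset (Fin m)) :
    ∀ γ : Fin m →₀ ℕ,
      ((∏ t ∈ S, (if t = j then -X j else X t - X j : MvPolynomial (Fin m) ℤ)).coeff γ).natAbs ≤ 1
      ∧ ((∏ t ∈ S, (if t = j then -X j else X t - X j : MvPolynomial (Fin m) ℤ)).coeff γ ≠ 0 →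
          ∀ t, γ t ≠ 0 → t ∈ S ∨ t = j) := by
  induction S using Finset.cons_induction with
  | empty =>
      intro γ
      simp only [Finset.prod_empty, MvPolynomial.coeff_one]
      constructor
      · split <;> simp
      · intro h t ht
        split at h
        · next hγ => subst hγ; simp at ht
        · simp at h
  | cons s S hs ih =>
      intro γ
      rw [Finset.prod_cons]
      by_cases hsj : s = j
      · subst hsj
        simp only [eq_self_iff_true, if_true]
        rw [neg_mul, MvPolynomial.coeff_neg, MvPolynomial.coeff_X_mul']
        constructor
        · split
          · simpa using (ih _).1
          · simp
        · intro h t ht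
          split at h
          · rcases eq_or_ne t s with rfl | hts
            · exact Or.inr rfl
            · have h2 := (ih _).2 (by simpa using h) t
              have : (γ - Finsupp.single s 1 : Fin m →₀ ℕ) t = γ t := by
                simp [Finsupp.sub_apply, Finsupp.single_apply, hts.symm]
              rcases h2 (by rw [this]; exact ht) with h3 | h3
              · exact Or.inl (Finset.mem_cons.2 (Or.inr h3))
              · exact Or.inr h3
          · simp at h
      · simp only [if_neg hsj]
        rw [sub_mul, MvPolynomial.coeff_sub, MvPolynomial.coeff_X_mul',
          MvPolynomial.coeff_X_mul']
        by_cases hγs : γ s = 0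
        · have h1 : s ∉ γ.support := by simp [hγs]
          rw [if_neg h1, zero_sub]
          constructor
          · split
            · simpa using (ih _).1
            · simp
          · intro h t ht
            split at h
            · rcases eq_or_ne t j with rfl | htj
              · exact Or.inr rfl
              · have h2 := (ih _).2 (by simpa using h) t
                have : (γ - Finsupp.single j 1 : Fin m →₀ ℕ) t = γ t := by
                  simp [Finsupp.sub_apply, Finsupp.single_apply, htj.symm]
                rcases h2 (by rw [this]; exact ht) with h3 | h3
                · exact Or.inl (Finset.mem_cons.2 (Or.inr h3))
                · exact Or.inr h3
            · simp at h
        · have h1 : s ∈ γ.support := by simpa using hγs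
          rw [if_pos h1]
          have h0 : (∏ t ∈ S, (if t = j then -X j else X t - X j :
              MvPolynomial (Fin m) ℤ)).coeff (γ - Finsupp.single j 1) = 0 := by
            by_contra hc
            have h2 := (ih _).2 hc s
            have hsj' : (γ - Finsupp.single j 1 : Fin m →₀ ℕ) s = γ s := by
              simp [Finsupp.sub_apply, Finsupp.single_apply, Ne.symm hsj]
            rcases h2 (by rw [hsj']; exact hγs) with h3 | h3
            · exact hs h3
            · exact hsj h3
          have hz : (if j ∈ γ.support then (∏ t ∈ S, (if t = j then -X j else X t - X j :
              MvPolynomial (Fin m) ℤ)).coeff (γ - Finsupp.single j 1) else 0) = 0 := by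
            split <;> simp [h0]
          rw [hz, sub_zero]
          constructor
          · exact (ih _).1
          · intro h t ht
            rcases eq_or_ne t s with rfl | hts
            · exact Or.inl (Finset.mem_cons_self _ _)
            · have h2 := (ih _).2 h t
              have : (γ - Finsupp.single s 1 : Fin m →₀ ℕ) t = γ t := by
                simp [Finsupp.sub_apply, Finsupp.single_apply, hts.symm]
              rcases h2 (by rw [this]; exact ht) with h3 | h3
              · exact Or.inl (Finset.mem_cons.2 (Or.inr h3))
              · exact Or.inr h3
/-- Each coefficient of `Φ_j(σ_k)` is bounded by `binom(m, k)`. -/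
lemma coeff_phi_esymm_le {m : ℕ} (j : Fin m) (k : ℕ) (γ : Fin m →₀ ℕ) :
    ((Phi ℤ j (esymm (Fin m) ℤ k)).coeff γ).natAbs ≤ Nat.choose m k := by
  have : Phi ℤ j (esymm (Fin m) ℤ k)
      = ∑ t ∈ powersetCard k univ,
          ∏ i ∈ t, (if i = j then -X j else X i - X j : MvPolynomial (Fin m) ℤ) := by
    rw [esymm, map_sum]
    refine Finset.sum_congr rfl fun t _ => ?_
    rw [map_prod]
    refine Finset.prod_congr rfl fun i _ => ?_
    simp [Phi, MvPolynomial.aeval_X]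
  rw [this, MvPolynomial.coeff_sum]
  refine (natAbs_sum_le' _ _).trans ?_
  calc ∑ t ∈ powersetCard k univ,
        ((∏ i ∈ t, (if i = j then -X j else X i - X j :
            MvPolynomial (Fin m) ℤ)).coeff γ).natAbs
      ≤ ∑ _t ∈ powersetCard k (univ : Finset (Fin m)), 1 :=
        Finset.sum_le_sum fun t _ => (coeff_prod_phi j t γ).1
    _ = Nat.choose m k := by
        rw [Finset.sum_const, smul_eq_mul, mul_one, Finset.card_powersetCard,
          Finset.card_univ, Fintype.card_fin]

/-- Each coefficient of `σ_k` is bounded by `binom(m, k)`. -/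
lemma coeff_esymm_le {m : ℕ} (k : ℕ) (γ : Fin m →₀ ℕ) :
    ((esymm (Fin m) ℤ k).coeff γ).natAbs ≤ Nat.choose m k := by
  rw [esymm_eq_sum_monomial, MvPolynomial.coeff_sum]
  refine (natAbs_sum_le' _ _).trans ?_
  calc ∑ t ∈ powersetCard k univ,
        ((monomial (∑ i ∈ t, Finsupp.single i 1) (1 : ℤ)).coeff γ).natAbs
      ≤ ∑ _t ∈ powersetCard k (univ : Finset (Fin m)), 1 := by
        refine Finset.sum_le_sum fun t _ => ?_
        rw [MvPolynomial.coeff_monomial]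
        split <;> simp
    _ = Nat.choose m k := by
        rw [Finset.sum_const, smul_eq_mul, mul_one, Finset.card_powersetCard,
          Finset.card_univ, Fintype.card_fin]

lemma coeff_G_le {n : ℕ} (T : Fin (n - 1) → Fin n) (i : Fin (n - 1)) (γ : Fin (n - 1) →₀ ℕ) :
    ((G ℤ n T i).coeff γ).natAbs ≤ Nat.choose (n - 1) ((i : ℕ) + 1) := by
  rw [G, PhiFull]
  split
  · exact coeff_phi_esymm_le _ _ _
  · simpa using coeff_esymm_le ((i : ℕ) + 1) γ

lemma choose_aux {n k : ℕ} (hn : 2 ≤ n) (hk : 1 ≤ k) :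
    Nat.choose (n - 1) k ≤ Nat.choose (k + n - 2) (n - 2) := by
  have h1 : Nat.choose (k + n - 2) (k + n - 2 - (n - 2)) = Nat.choose (k + n - 2) (n - 2) :=
    Nat.choose_symm (by omega)
  have h2 : k + n - 2 - (n - 2) = k := by omega
  rw [h2] at h1
  rw [← h1]
  exact Nat.choose_le_choose k (by omega)

/-- The entries of row `(i, α)` of `M_T` are bounded by `binom(i+1+n-2, n-2)`. -/
lemma casasM_entry_le {n : ℕ} (hn : 2 ≤ n) (T : Fin (n - 1) → Fin n)
    (r : (i : Fin (n - 1)) × Sym (Fin (n - 1)) (casasD n - ((i : ℕ) + 1)))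
    (c : Sym (Fin (n - 1)) (casasD n)) :
    ((casasM n T) r c).natAbs ≤ Nat.choose ((r.1 : ℕ) + 1 + n - 2) (n - 2) := by
  rw [casasM, MvPolynomial.coeff_monomial_mul']
  split
  · rw [one_mul]
    exact (coeff_G_le T r.1 _).trans (choose_aux hn (by omega))
  · simp

/-- Determinant bound: `|det M| ≤ card! · ∏ rows (row bound)`. -/
lemma det_natAbs_le_of_bound {ι : Type*} [Fintype ι] [DecidableEq ι]
    (M : Matrix ι ι ℤ) (B : ι → ℕ) (h : ∀ i j, (M i j).natAbs ≤ B i) :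
    M.det.natAbs ≤ (Fintype.card ι).factorial * ∏ i, B i := by
  rw [Matrix.det_apply']
  refine (natAbs_sum_le' _ _).trans ?_
  have key : ∀ σ : Equiv.Perm ι,
      (((Equiv.Perm.sign σ : ℤˣ) : ℤ) * ∏ i, M (σ i) i).natAbs ≤ ∏ i, B i := by
    intro σ
    rw [Int.natAbs_mul, Int.units_natAbs, one_mul, natAbs_prod']
    calc ∏ i, (M (σ i) i).natAbs
        ≤ ∏ i, B (σ i) :=
          Finset.prod_le_prod (fun _ _ => Nat.zero_le _) (fun i _ => h (σ i) i)
      _ = ∏ i, B i := Equiv.prod_comp σ B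
  calc ∑ σ : Equiv.Perm ι, (((Equiv.Perm.sign σ : ℤˣ) : ℤ) * ∏ i, M (σ i) i).natAbs
      ≤ ∑ _σ : Equiv.Perm ι, ∏ i, B i := Finset.sum_le_sum fun σ _ => key σ
    _ = (Fintype.card ι).factorial * ∏ i, B i := by
        rw [Finset.sum_const, smul_eq_mul, Finset.card_univ, Fintype.card_perm]

lemma card_sym_fin (n e : ℕ) (hn : 2 ≤ n) :
    Fintype.card (Sym (Fin (n - 1)) e) = Nat.choose (e + n - 2) (n - 2) := by
  rw [Sym.card_sym_eq_choose, Fintype.card_fin]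
  have h1 : n - 1 + e - 1 = e + n - 2 := by omega
  rw [h1]
  have h2 : e + n - 2 - (n - 2) = e := by omega
  rw [← Nat.choose_symm (by omega : n - 2 ≤ e + n - 2), h2]

lemma card_cols (n : ℕ) (hn : 2 ≤ n) :
    Fintype.card (Sym (Fin (n - 1)) (casasD n)) = casasC n := by
  rw [card_sym_fin n _ hn, casasC]
  rcases eq_or_lt_of_le hn with h | h
  · rw [← h]
    norm_num
  · have h3 : 3 ≤ n := h
    congr 1
    -- `casasD n + n - 2 = (n² - n)/2`
    have hev1 : Even (n * n - 3 * n + 4) := by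
      refine Even.add ?_ (by decide)
      rw [Nat.even_sub (by nlinarith : 3 * n ≤ n * n)]
      simp [Nat.even_mul, Nat.even_add, parity_simps]
    have hev2 : Even (n * n - n) := by
      rw [Nat.even_sub (Nat.le_mul_of_pos_left n (by omega))]
      simp [Nat.even_mul]
    have e1 : 2 * casasD n = n * n - 3 * n + 4 := by
      rw [casasD, pow_two]
      exact Nat.two_mul_div_two_of_even hev1
    have e2 : 2 * ((n ^ 2 - n) / 2) = n * n - n := by
      rw [pow_two]
      exact Nat.two_mul_div_two_of_even hev2
    obtain ⟨a, ha⟩ : ∃ a, n * n = a := ⟨_, rfl⟩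
    obtain ⟨b, hb⟩ : ∃ b, (n ^ 2 - n) / 2 = b := ⟨_, rfl⟩
    have hge : 3 * n ≤ a := by nlinarith [ha.symm.le]
    rw [ha] at e1 e2
    rw [hb] at e2 ⊢
    omega

lemma prod_fin_to_Icc (n : ℕ) (hn : 2 ≤ n) (F : ℕ → ℕ) :
    ∏ i : Fin (n - 1), F ((i : ℕ) + 1) = ∏ i ∈ Finset.Icc 1 (n - 1), F i := by
  rw [Fin.prod_univ_eq_prod_range (fun i => F (i + 1)) (n - 1)]
  refine Finset.prod_bij' (fun i _ => i + 1) (fun i _ => i - 1) ?_ ?_ ?_ ?_ ?_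
  · intro a ha
    simp only [Finset.mem_range] at ha
    simp only [Finset.mem_Icc]
    omega
  · intro a ha
    simp only [Finset.mem_Icc] at ha
    simp only [Finset.mem_range]
    omega
  · intro a ha
    show a + 1 - 1 = a
    omega
  · intro a ha
    simp only [Finset.mem_Icc] at ha
    show a - 1 + 1 = a
    omega
  · intro a ha; rfl

end AuxLemmas

/-- **Lemma.** Every `C × C` minor `A` of `M_T` satisfies
`|A| ≤ C! · ∏_{i=1}^{n-1} binom(i+n-2, n-2)^binom(d-i+n-2, n-2)`. -/
theorem minor_abs_le_bound (n : ℕ) (hn : 2 ≤ n) (T : Fin (n - 1) → Fin n)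
    (f : Sym (Fin (n - 1)) (casasD n) →
      (i : Fin (n - 1)) × Sym (Fin (n - 1)) (casasD n - ((i : ℕ) + 1)))
    (hf : Function.Injective f) :
    (((casasM n T).submatrix f id).det).natAbs ≤ casasBound n := by
  classical
  have hdet := det_natAbs_le_of_bound ((casasM n T).submatrix f id)
      (fun c => Nat.choose (((f c).1 : ℕ) + 1 + n - 2) (n - 2))
      (fun c c' => casasM_entry_le hn T (f c) c')
  refine hdet.trans ?_
  rw [casasBound, card_cols n hn]
  refine Nat.mul_le_mul_left _ ?_
  have step1 : (∏ c, Nat.choose (((f c).1 : ℕ) + 1 + n - 2) (n - 2))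
      = ∏ r ∈ Finset.univ.image f,
          Nat.choose ((r.1 : ℕ) + 1 + n - 2) (n - 2) :=
    (Finset.prod_image (f := fun r => Nat.choose ((r.1 : ℕ) + 1 + n - 2) (n - 2))
      (fun a _ b _ h => hf h)).symm
  rw [step1]
  have step2 : (∏ r ∈ Finset.univ.image f,
        Nat.choose ((r.1 : ℕ) + 1 + n - 2) (n - 2))
      ≤ ∏ r : (i : Fin (n - 1)) × Sym (Fin (n - 1)) (casasD n - ((i : ℕ) + 1)),
          Nat.choose ((r.1 : ℕ) + 1 + n - 2) (n - 2) :=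
    Finset.prod_le_prod_of_subset_of_one_le' (Finset.subset_univ _)
      (fun r _ _ => Nat.choose_pos (by omega))
  refine step2.trans ?_
  have step3 : (∏ r : (i : Fin (n - 1)) × Sym (Fin (n - 1)) (casasD n - ((i : ℕ) + 1)),
        Nat.choose ((r.1 : ℕ) + 1 + n - 2) (n - 2))
      = ∏ i : Fin (n - 1), Nat.choose ((i : ℕ) + 1 + n - 2) (n - 2) ^
          Nat.choose (casasD n - ((i : ℕ) + 1) + n - 2) (n - 2) := by
    rw [← Finset.univ_sigma_univ, Finset.prod_sigma]
    refine Finset.prod_congr rfl fun i _ => ?_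
    show (∏ _a : Sym (Fin (n - 1)) (casasD n - ((i : ℕ) + 1)),
        Nat.choose ((i : ℕ) + 1 + n - 2) (n - 2)) = _
    rw [Finset.prod_const, Finset.card_univ, card_sym_fin n _ hn]
  rw [step3]
  rw [prod_fin_to_Icc n hn (fun i => Nat.choose (i + n - 2) (n - 2) ^
    Nat.choose (casasD n - i + n - 2) (n - 2))]
end

section
/- Let p be a prime number and K an algebraically closed field of characteristic p. The polynomial f = x^{p+1} − x^p ∈ K[x] is a Casas–Alvero polynomial of degree p+1, yet there is no b ∈ K with f = (x−b)^{p+1}. -/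
open Polynomial MvPolynomial

/-- In characteristic `p`, the polynomial `x^{p+1} - x^p` is a Casas–Alvero polynomial of degree
`p+1` which is not a `(p+1)`-st power of a linear polynomial. -/
theorem counterexample_char_p (p : ℕ) (hp : p.Prime) (K : Type) [Field K] [IsAlgClosed K]
    [CharP K p] :
    IsCasasAlvero (p + 1) (Polynomial.X ^ (p + 1) - Polynomial.X ^ p : Polynomial K) ∧
      ¬ ∃ b : K, (Polynomial.X ^ (p + 1) - Polynomial.X ^ p : Polynomial K) =
        (Polynomial.X - Polynomial.C b) ^ (p + 1) := by
  have hdlt : (Polynomial.X ^ p : K[X]).degree < (Polynomial.X ^ (p+1) : K[X]).degree := by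
    rw [Polynomial.degree_X_pow, Polynomial.degree_X_pow]
    exact_mod_cast Nat.lt_succ_self p
  constructor
  · refine ⟨(Polynomial.monic_X_pow (p+1)).sub_of_left hdlt, ?_, ?_⟩
    · have : (Polynomial.X ^ (p + 1) - Polynomial.X ^ p : K[X]).degree = (p + 1 : ℕ) := by
        rw [Polynomial.degree_sub_eq_left_of_degree_lt hdlt, Polynomial.degree_X_pow]
      exact Polynomial.natDegree_eq_of_degree_eq_some this
    · intro i hi
      obtain ⟨hi0, hin⟩ := Finset.mem_Ioo.mp hi
      have h1 : Polynomial.hasseDeriv i (Polynomial.X ^ (p+1) : K[X]) =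
          Polynomial.monomial (p + 1 - i) (((p+1).choose i : K)) := by
        rw [← Polynomial.monomial_one_right_eq_X_pow, Polynomial.hasseDeriv_monomial, mul_one]
      have h2 : Polynomial.hasseDeriv i (Polynomial.X ^ p : K[X]) =
          Polynomial.monomial (p - i) ((p.choose i : K)) := by
        rw [← Polynomial.monomial_one_right_eq_X_pow, Polynomial.hasseDeriv_monomial, mul_one]
      rcases lt_or_eq_of_le (Nat.lt_succ_iff.mp hin) with hip | hip
      · -- i < p, use g = X
        refine ⟨Polynomial.X, by simp, ?_, ?_⟩
        · exact dvd_sub (dvd_pow_self Polynomial.X (Nat.succ_ne_zero p))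
            (dvd_pow_self Polynomial.X (by omega))
        · rw [map_sub, h1, h2]
          refine dvd_sub ?_ ?_
          · rw [← Polynomial.C_mul_X_pow_eq_monomial]
            exact Dvd.dvd.mul_left (dvd_pow_self _ (by omega)) _
          · rw [← Polynomial.C_mul_X_pow_eq_monomial]
            exact Dvd.dvd.mul_left (dvd_pow_self _ (by omega)) _
      · -- i = p, use g = X - 1
        subst hip
        refine ⟨Polynomial.X - 1, ?_, ⟨Polynomial.X ^ i, by ring⟩, ?_⟩
        · have : (Polynomial.X - 1 : K[X]).degree = 1 := by
            simpa using Polynomial.degree_X_sub_C (1 : K)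
          rw [this]; exact zero_lt_one
        · have hc : (((i+1).choose i : K)) = 1 := by
            rw [Nat.choose_succ_self_right]
            push_cast
            simp [CharP.cast_eq_zero K i]
        
          rw [map_sub, h1, h2, hc, Nat.choose_self, Nat.sub_self, Nat.cast_one]
          have : i + 1 - i = 1 := by omega
          rw [this]
          simp [Polynomial.monomial_one_right_eq_X_pow]
  · rintro ⟨b, hb⟩
    have h0 : Polynomial.eval 0 (Polynomial.X ^ (p + 1) - Polynomial.X ^ p : K[X]) = 0 := by
      simp [hp.pos.ne']
    have h0' : Polynomial.eval 0 ((Polynomial.X - Polynomial.C b) ^ (p+1) : K[X]) =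
        (-b) ^ (p+1) := by
      simp
    rw [hb, h0'] at h0
    have hb0 : b = 0 := by
      have := pow_eq_zero_iff (Nat.succ_ne_zero p) |>.mp h0
      simpa using this
    subst hb0
    have h1 : Polynomial.eval 1 (Polynomial.X ^ (p + 1) - Polynomial.X ^ p : K[X]) = 0 := by simp
    rw [hb] at h1
    simp at h1
end

section
/- Let n be a strictly positive integer, p a prime number, and ℓ a non-negative integer. If over every algebraically closed field of characteristic p every Casas–Alvero polynomial of degree n is an n-th power of a linear polynomial, then over every algebraically closed field of characteristic p every Casas–Alvero polynomial of degree n·p^ℓ is an (n·p^ℓ)-th power of a linear polynomial. -/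
/-!
In characteristic `p`, let `f` be a Casas–Alvero polynomial whose degree is divisible by `p`.
If some exponent `k` with `p ∤ k` carried a nonzero coefficient, take the largest one: every
higher term of `H_k f` vanishes, by maximality of `k` or because Lucas' theorem kills the
binomial coefficient, so `H_k f` is a nonzero constant and cannot share a factor with `f`.
Hence `f` is a polynomial in `x^p`, i.e. `f = g^p` over a perfect field, and
`H_{jp}(g^p) = (H_j g)^p` shows that `g` is again Casas–Alvero. Iterating `ℓ` times brings the
degree `n p^ℓ` down to `n`.
-/

open Polynomial MvPolynomial

lemma Polynomial.hasseDeriv_map {R S : Type*} [Semiring R] [Semiring S] (φ : R →+* S) (k : ℕ)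
    (g : R[X]) :
    hasseDeriv k (g.map φ) = (hasseDeriv k g).map φ := by
  ext u
  simp only [hasseDeriv_coeff, coeff_map, map_mul, map_natCast]

lemma Polynomial.eq_expand_contract_of_forall_coeff_eq_zero {R : Type*} [CommSemiring R] {p : ℕ}
    {f : R[X]} (hp : p ≠ 0) (hf : ∀ k, ¬ p ∣ k → f.coeff k = 0) :
    f = expand R p (contract p f) := by
  ext k
  rw [coeff_expand (Nat.pos_of_ne_zero hp), coeff_contract hp]
  split_ifs with hk
  · rw [Nat.div_mul_cancel hk]
  · exact hf k hk

section CharP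

variable {R : Type*} {p : ℕ} [Fact p.Prime]

lemma Nat.cast_choose_eq_zero_of_dvd_of_not_dvd [Semiring R] [CharP R p] {m k : ℕ}
    (hm : p ∣ m) (hk : ¬ p ∣ k) : (m.choose k : R) = 0 := by
  have hkp : 0 < k % p := Nat.pos_of_ne_zero fun h => hk (Nat.dvd_of_mod_eq_zero h)
  rw [CharP.natCast_eq_natCast' R p Choose.choose_modEq_choose_mod_mul_choose_div_nat,
    Nat.mod_eq_zero_of_dvd hm, Nat.choose_eq_zero_of_lt hkp, zero_mul, Nat.cast_zero]

lemma Nat.cast_choose_mul_mul [Semiring R] [CharP R p] (a b : ℕ) :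
    ((p * a).choose (p * b) : R) = a.choose b :=
  CharP.natCast_eq_natCast' R p Choose.choose_mul_mul_modEq_choose_nat

namespace Polynomial

lemma hasseDeriv_mul_expand [CommSemiring R] [CharP R p] (j : ℕ) (g : R[X]) :
    hasseDeriv (p * j) (expand R p g) = expand R p (hasseDeriv j g) := by
  have hp := (Fact.out : p.Prime).pos
  ext u
  rw [hasseDeriv_coeff, coeff_expand hp, coeff_expand hp]
  by_cases hu : p ∣ u
  · obtain ⟨s, rfl⟩ := hu
    rw [← mul_add, if_pos (dvd_mul_right p (s + j)), if_pos (dvd_mul_right p s),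
      Nat.mul_div_cancel_left _ hp, Nat.mul_div_cancel_left _ hp, hasseDeriv_coeff,
      Nat.cast_choose_mul_mul]
  · rw [if_neg fun h => hu ((Nat.dvd_add_left (dvd_mul_right p j)).1 h), if_neg hu, mul_zero]

lemma hasseDeriv_mul_pow_char [CommSemiring R] [CharP R p] (j : ℕ) (g : R[X]) :
    hasseDeriv (p * j) (g ^ p) = hasseDeriv j g ^ p := by
  rw [← map_frobenius_expand, hasseDeriv_map, hasseDeriv_mul_expand, map_frobenius_expand]

lemma hasseDeriv_eq_C_coeff_of_forall_coeff_eq_zero [Semiring R] [CharP R p] {f : R[X]} {k : ℕ}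
    (hk : ¬ p ∣ k) (hf : ∀ m, k < m → ¬ p ∣ m → f.coeff m = 0) :
    hasseDeriv k f = C (f.coeff k) := by
  ext u
  rw [hasseDeriv_coeff, coeff_C]
  rcases Nat.eq_zero_or_pos u with rfl | hu
  · simp
  rw [if_neg hu.ne']
  by_cases hdvd : p ∣ u + k
  · rw [Nat.cast_choose_eq_zero_of_dvd_of_not_dvd hdvd hk, zero_mul]
  · rw [hf _ (by omega) hdvd, mul_zero]

end Polynomial

end CharP

lemma Polynomial.exists_dvd_dvd_of_dvd_pow_of_dvd_pow {K : Type*} [Field K] {d a b : K[X]}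
    {k l : ℕ} (hd : 0 < d.degree) (ha : d ∣ a ^ k) (hb : d ∣ b ^ l) :
    ∃ q : K[X], 0 < q.degree ∧ q ∣ a ∧ q ∣ b := by
  obtain ⟨q, hq, hqd⟩ := WfDvdMonoid.exists_irreducible_factor (not_isUnit_of_degree_pos d hd)
    (ne_zero_of_degree_gt hd)
  exact ⟨q, degree_pos_of_irreducible hq, hq.prime.dvd_of_dvd_pow (hqd.trans ha),
    hq.prime.dvd_of_dvd_pow (hqd.trans hb)⟩

namespace IsCasasAlvero

variable {K : Type} [Field K] {n : ℕ} {f : K[X]}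

lemma hasseDeriv_ne_C (hf : IsCasasAlvero n f) {k : ℕ} (hk : k ∈ Finset.Ioo 0 n) {c : K}
    (hc : c ≠ 0) : hasseDeriv k f ≠ Polynomial.C c := by
  intro hC
  obtain ⟨g, hg, -, hgH⟩ := hf.2.2 k hk
  have := degree_le_of_dvd (hC ▸ hgH) (C_ne_zero.2 hc)
  rw [degree_C hc] at this
  exact hg.not_ge this

variable {p : ℕ} [Fact p.Prime] [CharP K p]

lemma coeff_eq_zero_of_not_dvd (hf : IsCasasAlvero n f) (hn : p ∣ n) {k : ℕ} (hk : ¬ p ∣ k) :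
    f.coeff k = 0 := by
  classical
  by_contra hfk
  obtain ⟨k₀, hk₀, hmax⟩ := (f.support.filter (¬ p ∣ ·)).exists_max_image id
    ⟨k, Finset.mem_filter.2 ⟨Polynomial.mem_support_iff.2 hfk, hk⟩⟩
  simp only [Finset.mem_filter, Polynomial.mem_support_iff, id] at hk₀ hmax
  have hconst : hasseDeriv k₀ f = Polynomial.C (f.coeff k₀) :=
    hasseDeriv_eq_C_coeff_of_forall_coeff_eq_zero hk₀.2 fun m hm hpm =>
      by_contra fun h => (hmax m ⟨h, hpm⟩).not_gt hm
  have hk₀n : k₀ ∈ Finset.Ioo 0 n := by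
    have hle : k₀ ≤ n := hf.2.1 ▸ le_natDegree_of_ne_zero hk₀.1
    have h0 : k₀ ≠ 0 := by rintro rfl; exact hk₀.2 (dvd_zero p)
    have hne : k₀ ≠ n := by rintro rfl; exact hk₀.2 hn
    exact Finset.mem_Ioo.2 ⟨by omega, by omega⟩
  exact hf.hasseDeriv_ne_C hk₀n hk₀.1 hconst

lemma of_pow {m : ℕ} {g : K[X]} (hg : IsCasasAlvero (m * p) (g ^ p)) : IsCasasAlvero m g := by
  have hp := (Fact.out : p.Prime).pos
  obtain ⟨hmon, hdeg, hca⟩ := hg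
  refine ⟨?_, ?_, fun j hj => ?_⟩
  · refine frobenius_inj K p ?_
    simpa only [frobenius_def, one_pow, ← leadingCoeff_pow] using hmon.leadingCoeff
  · rw [natDegree_pow, mul_comm] at hdeg
    exact Nat.eq_of_mul_eq_mul_right hp hdeg
  · obtain ⟨hj0, hjm⟩ := Finset.mem_Ioo.1 hj
    have hpj : p * j ∈ Finset.Ioo 0 (m * p) :=
      Finset.mem_Ioo.2 ⟨Nat.mul_pos hp hj0, by nlinarith⟩
    obtain ⟨d, hd, hdf, hdH⟩ := hca (p * j) hpj
    rw [hasseDeriv_mul_pow_char] at hdH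
    exact exists_dvd_dvd_of_dvd_pow_of_dvd_pow hd hdf hdH

variable [PerfectRing K p]

lemma exists_eq_pow {m : ℕ} (hf : IsCasasAlvero (m * p) f) :
    ∃ g : K[X], IsCasasAlvero m g ∧ f = g ^ p := by
  have hexp := eq_expand_contract_of_forall_coeff_eq_zero (Fact.out : p.Prime).ne_zero
    fun k hk => hf.coeff_eq_zero_of_not_dvd (dvd_mul_left p m) hk
  rw [polynomial_expand_eq] at hexp
  exact ⟨_, of_pow (hexp ▸ hf), hexp⟩

lemma exists_eq_pow_pow (m ℓ : ℕ) (hf : IsCasasAlvero (m * p ^ ℓ) f) :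
    ∃ g : K[X], IsCasasAlvero m g ∧ f = g ^ p ^ ℓ := by
  induction ℓ generalizing f with
  | zero => exact ⟨f, by simpa using hf, by simp⟩
  | succ ℓ ih =>
    rw [pow_succ, ← mul_assoc] at hf
    obtain ⟨g₁, hg₁, rfl⟩ := hf.exists_eq_pow
    obtain ⟨g, hg, rfl⟩ := ih hg₁
    exact ⟨g, hg, by rw [← pow_mul, pow_succ]⟩

end IsCasasAlvero

theorem CA_np_pow_charP_general (n : ℕ) (p : ℕ) (hp : p.Prime) (ℓ : ℕ)
    (h : ∀ (K : Type) [Field K] [IsAlgClosed K] [CharP K p],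
      ∀ f : Polynomial K, IsCasasAlvero n f →
        ∃ b : K, f = (Polynomial.X - Polynomial.C b) ^ n) :
    ∀ (K : Type) [Field K] [IsAlgClosed K] [CharP K p],
      ∀ f : Polynomial K, IsCasasAlvero (n * p ^ ℓ) f →
        ∃ b : K, f = (Polynomial.X - Polynomial.C b) ^ (n * p ^ ℓ) := by
  intro K _ _ _ f hf
  have : Fact p.Prime := ⟨hp⟩
  obtain ⟨g, hg, rfl⟩ := hf.exists_eq_pow_pow n ℓ
  obtain ⟨b, rfl⟩ := h K g hg
  exact ⟨b, (pow_mul _ _ _).symm⟩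

/-- If `CA_{n,p}` holds then so does `CA_{n·p^ℓ, p}`. -/
theorem CA_np_pow_charP (n : ℕ) (hn : 0 < n) (p : ℕ) (hp : p.Prime) (ℓ : ℕ)
    (h : ∀ (K : Type) [Field K] [IsAlgClosed K] [CharP K p],
      ∀ f : Polynomial K, IsCasasAlvero n f →
        ∃ b : K, f = (Polynomial.X - Polynomial.C b) ^ n) :
    ∀ (K : Type) [Field K] [IsAlgClosed K] [CharP K p],
      ∀ f : Polynomial K, IsCasasAlvero (n * p ^ ℓ) f →
        ∃ b : K, f = (Polynomial.X - Polynomial.C b) ^ (n * p ^ ℓ) :=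
  CA_np_pow_charP_general n p hp ℓ h
end

section
/- Let n be a strictly positive integer, p a prime number, and ℓ a non-negative integer. If over every algebraically closed field of characteristic p every Casas–Alvero polynomial of degree n is an n-th power of a linear polynomial, then over every algebraically closed field of characteristic 0 every Casas–Alvero polynomial of degree n·p^ℓ is an (n·p^ℓ)-th power of a linear polynomial. -/
/-!
Over an algebraically closed field a monic polynomial of degree `m` is `∏_{a ∈ s} (X - a)` for
its root multiset `s`, and `(H_i f)(c) = ±e_{m-i}(s - c)`. So `f` is Casas–Alvero iff for each
`0 < i < m` some root `c` has `e_{m-i}(s - c) = 0`: integer polynomial equations, homogeneous in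
the differences of the roots.

Characteristic `0` to `p`: a counterexample has two distinct roots. Take a valuation ring of `K`
whose maximal ideal contains `p`, translate and rescale the roots so that all of them lie in it
and two of them become `0` and `1`, and reduce modulo the maximal ideal. This is a counterexample
of the same degree over the algebraic closure of a residue field of characteristic `p`.

Inside characteristic `p`: if `p` divides the degree `N` of a Casas–Alvero polynomial `f`, then
for `p ∤ j` all higher coefficients `f_k` with `p ∤ k` vanish by downward induction, and Lucas'
theorem kills `binom(k, j)` for `p ∣ k`, so `H_j f` is the constant `f_j`, which must vanish at a
root of `f`. Hence `f = u ^ p`, and `H_{kp}(u ^ p) = (H_k u) ^ p` makes `u` Casas–Alvero of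
degree `N / p`.
-/


open Polynomial MvPolynomial

theorem Multiset.esymm_map_ringHom {R S : Type*} [CommRing R] [CommRing S] (φ : R →+* S)
    (s : Multiset R) (k : ℕ) : (s.map φ).esymm k = φ (s.esymm k) := by
  simp only [Multiset.esymm, Multiset.powersetCard_map, Multiset.map_map, map_multiset_sum,
    Function.comp_def, map_multiset_prod]

theorem Polynomial.eval_hasseDeriv_multiset_prod_X_sub_C {R : Type*} [CommRing R]
    (s : Multiset R) (c : R) {i : ℕ} (hi : i ≤ Multiset.card s) :
    (hasseDeriv i (s.map fun a => X - C a).prod).eval c =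
      (-1) ^ (Multiset.card s - i) * (s.map (· - c)).esymm (Multiset.card s - i) := by
  have htaylor : taylor c (s.map fun a => X - C a).prod =
      ((s.map (· - c)).map fun a => X - C a).prod := by
    rw [taylor_apply, multiset_prod_comp, Multiset.map_map, Multiset.map_map]
    congr 1
    refine Multiset.map_congr rfl fun a _ => ?_
    simp only [Function.comp_apply, sub_comp, X_comp, C_comp, C_sub]
    ring
  rw [← taylor_coeff, htaylor, Multiset.prod_X_sub_C_coeff _ (by simpa using hi),
    Multiset.card_map]

theorem Polynomial.multiset_prod_X_sub_C_eq_pow_iff {R : Type*} [CommRing R] [IsDomain R]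
    (s : Multiset R) (b : R) :
    (s.map fun a => X - C a).prod = (X - C b) ^ Multiset.card s ↔ ∀ a ∈ s, a = b := by
  rw [← Multiset.eq_replicate_card]
  constructor
  · intro h
    simpa [roots_pow, roots_X_sub_C, Multiset.nsmul_singleton] using congrArg roots h
  · intro h
    rw [h, Multiset.map_replicate, Multiset.prod_replicate, Multiset.card_replicate]

theorem Polynomial.exists_mem_ne_of_multiset_prod_X_sub_C_ne_pow {R : Type*} [CommRing R]
    [IsDomain R] {s : Multiset R}
    (h : ∀ b, (s.map fun a => X - C a).prod ≠ (X - C b) ^ Multiset.card s) :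
    ∃ a ∈ s, ∃ b ∈ s, a ≠ b := by
  by_contra! hall
  rcases s.empty_or_exists_mem with rfl | ⟨c, hc⟩
  · exact h 0 (by simp)
  · exact h c ((multiset_prod_X_sub_C_eq_pow_iff s c).2 fun a ha => hall a ha c hc)

theorem isCasasAlvero_iff_exists_isRoot {K : Type} [Field K] [IsAlgClosed K] {m : ℕ} {f : K[X]} :
    IsCasasAlvero m f ↔ f.Monic ∧ f.natDegree = m ∧
      ∀ i ∈ Finset.Ioo 0 m, ∃ β, f.IsRoot β ∧ (hasseDeriv i f).IsRoot β := by
  refine and_congr_right fun _ => and_congr_right fun _ => forall₂_congr fun i _ => ?_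
  constructor
  · rintro ⟨g, hg, hgf, hgH⟩
    obtain ⟨β, hβ⟩ := IsAlgClosed.exists_root g hg.ne'
    exact ⟨β, eval_eq_zero_of_dvd_of_eval_eq_zero hgf hβ,
      eval_eq_zero_of_dvd_of_eval_eq_zero hgH hβ⟩
  · rintro ⟨β, hf, hH⟩
    exact ⟨Polynomial.X - Polynomial.C β, by rw [degree_X_sub_C]; exact zero_lt_one,
      dvd_iff_isRoot.2 hf, dvd_iff_isRoot.2 hH⟩

def IsCasasAlveroRoots {R : Type*} [CommRing R] (s : Multiset R) : Prop :=
  ∀ i ∈ Finset.Ioo 0 (Multiset.card s),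
    ∃ c ∈ s, (s.map (· - c)).esymm (Multiset.card s - i) = 0

theorem isCasasAlvero_multiset_prod_iff {K : Type} [Field K] [IsAlgClosed K] (s : Multiset K) :
    IsCasasAlvero (Multiset.card s) (s.map fun a => Polynomial.X - Polynomial.C a).prod ↔
      IsCasasAlveroRoots s := by
  have hmonic : (s.map fun a => Polynomial.X - Polynomial.C a).prod.Monic :=
    monic_multiset_prod_of_monic _ _ fun a _ => monic_X_sub_C a
  rw [isCasasAlvero_iff_exists_isRoot, IsCasasAlveroRoots]
  simp only [hmonic, natDegree_multiset_prod_X_sub_C_eq_card, true_and]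
  refine forall₂_congr fun i hi => exists_congr fun c => and_congr ?_ ?_
  · rw [← mem_roots hmonic.ne_zero, roots_multiset_prod_X_sub_C]
  · rw [IsRoot.def, eval_hasseDeriv_multiset_prod_X_sub_C s c (Finset.mem_Ioo.1 hi).2.le,
      mul_eq_zero, or_iff_right (pow_ne_zero _ (neg_ne_zero.2 one_ne_zero))]

namespace IsCasasAlveroRoots

variable {R S : Type*} [CommRing R] [CommRing S] {s : Multiset R}

theorem map (h : IsCasasAlveroRoots s) (φ : R →+* S) : IsCasasAlveroRoots (s.map φ) := by
  intro i hi
  rw [Multiset.card_map] at hi ⊢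
  obtain ⟨c, hc, hzero⟩ := h i hi
  refine ⟨φ c, Multiset.mem_map_of_mem φ hc, ?_⟩
  have : (s.map φ).map (· - φ c) = (s.map (· - c)).map φ := by
    simp only [Multiset.map_map, Function.comp_def, map_sub]
  rw [this, Multiset.esymm_map_ringHom, hzero, map_zero]

theorem of_map {φ : R →+* S} (hφ : Function.Injective φ) (h : IsCasasAlveroRoots (s.map φ)) :
    IsCasasAlveroRoots s := by
  intro i hi
  rw [← Multiset.card_map φ] at hi ⊢
  obtain ⟨_, hφc, hzero⟩ := h i hi
  obtain ⟨c, hc, rfl⟩ := Multiset.mem_map.1 hφc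
  refine ⟨c, hc, (map_eq_zero_iff φ hφ).1 ?_⟩
  have : (s.map φ).map (· - φ c) = (s.map (· - c)).map φ := by
    simp only [Multiset.map_map, Function.comp_def, map_sub]
  rwa [this, Multiset.esymm_map_ringHom] at hzero

theorem map_mul_sub (h : IsCasasAlveroRoots s) (t a : R) :
    IsCasasAlveroRoots (s.map fun x => t * (x - a)) := by
  intro i hi
  rw [Multiset.card_map] at hi ⊢
  obtain ⟨c, hc, hzero⟩ := h i hi
  refine ⟨t * (c - a), Multiset.mem_map_of_mem _ hc, ?_⟩
  have : (s.map fun x => t * (x - a)).map (· - t * (c - a)) = (s.map (· - c)).map (t • ·) := by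
    simp only [Multiset.map_map, Function.comp_def, smul_eq_mul]
    congr 1; funext x; ring
  rw [this, ← Multiset.pow_smul_esymm, hzero, smul_zero]

end IsCasasAlveroRoots

theorem ValuationSubring.exists_natCast_mem_maximalIdeal (K : Type*) [Field K] [CharZero K]
    {p : ℕ} (hp : p.Prime) :
    ∃ B : ValuationSubring K, (p : B) ∈ IsLocalRing.maximalIdeal B := by
  have hI : Ideal.span {(p : (⊥ : Subring K))} ≠ ⊤ := by
    rw [Ne, Ideal.span_singleton_eq_top, isUnit_iff_exists]
    rintro ⟨⟨_, hn⟩, hpn, -⟩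
    obtain ⟨n, rfl⟩ := Subring.mem_bot.1 hn
    have : ((p * n : ℤ) : K) = ((1 : ℤ) : K) := by
      push_cast; exact congrArg Subtype.val hpn
    have := Int.eq_one_of_mul_eq_one_right (by positivity) (Int.cast_injective this)
    exact hp.ne_one (by exact_mod_cast this)
  obtain ⟨B, -, hB⟩ := Ideal.image_subset_nonunits_valuationSubring _ hI
  refine ⟨B, (B.valuation_lt_one_iff _).2 ?_⟩
  have := hB ⟨_, Ideal.subset_span rfl, rfl⟩
  simpa using (B.mem_nonunits_iff).1 this

theorem ValuationSubring.exists_inv_mul_mem {K : Type*} [Field K] (B : ValuationSubring K)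
    {s : Finset K} (hs : ∃ x ∈ s, x ≠ 0) :
    ∃ j ∈ s, j ≠ 0 ∧ ∀ x ∈ s, j⁻¹ * x ∈ B := by
  obtain ⟨x₀, hx₀, hx₀0⟩ := hs
  obtain ⟨j, hj, hmax⟩ := s.exists_max_image B.valuation ⟨x₀, hx₀⟩
  have hj0 : B.valuation j ≠ 0 :=
    (((Valuation.ne_zero_iff _).2 hx₀0).bot_lt.trans_le (hmax x₀ hx₀)).ne'
  refine ⟨j, hj, (Valuation.ne_zero_iff _).1 hj0, fun x hx => ?_⟩
  rw [← B.valuation_le_one_iff, map_mul, map_inv₀]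
  exact inv_mul_le_one_of_le₀ (hmax x hx) zero_le

theorem IsLocalRing.exists_ringHom_isAlgClosed_charP {A : Type} [CommRing A] [IsLocalRing A]
    {p : ℕ} (hp : p.Prime) (hpA : (p : A) ∈ maximalIdeal A) :
    ∃ (Ω : Type) (_ : Field Ω) (_ : IsAlgClosed Ω) (_ : CharP Ω p),
      Nonempty (A →+* Ω) := by
  have : CharP (ResidueField A) p := (CharP.charP_iff_prime_eq_zero hp).2 <| by
    rw [← map_natCast (residue A)]; exact (residue_eq_zero_iff _).2 hpA
  exact ⟨AlgebraicClosure (ResidueField A), inferInstance, inferInstance, inferInstance,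
    ⟨(algebraMap _ _).comp (residue A)⟩⟩

theorem IsCasasAlveroRoots.exists_valuationSubring_zero_mem_one_mem {K : Type*} [Field K]
    {s : Multiset K} (h : IsCasasAlveroRoots s) {a b : K} (ha : a ∈ s) (hb : b ∈ s)
    (hab : a ≠ b) (B : ValuationSubring K) :
    ∃ z : Multiset B,
      Multiset.card z = Multiset.card s ∧ IsCasasAlveroRoots z ∧ 0 ∈ z ∧ 1 ∈ z := by
  classical
  obtain ⟨j, hj, hj0, hjB⟩ := B.exists_inv_mul_mem (s := (s.map (· - a)).toFinset)
    ⟨b - a, Multiset.mem_toFinset.2 (Multiset.mem_map_of_mem _ hb), sub_ne_zero.2 hab.symm⟩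
  simp only [Multiset.mem_toFinset, Multiset.mem_map] at hj hjB
  have hzB : ∀ y ∈ s.map fun x => j⁻¹ * (x - a), y ∈ B := by
    simp only [Multiset.mem_map]
    rintro _ ⟨x, hx, rfl⟩
    exact hjB _ ⟨x, hx, rfl⟩
  obtain ⟨z, hz⟩ : ∃ z : Multiset B, z.map B.subtype = s.map fun x => j⁻¹ * (x - a) :=
    (Multiset.canLift ((↑) : B → K) (· ∈ B)).prf _ hzB
  have hmem : ∀ y : B, (y : K) ∈ s.map (fun x => j⁻¹ * (x - a)) → y ∈ z := by
    intro y hy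
    rw [← hz] at hy
    obtain ⟨y', hy', hyy⟩ := Multiset.mem_map.1 hy
    rwa [← Subtype.ext hyy]
  obtain ⟨x, hx, hxj⟩ := hj
  refine ⟨z, by rw [← Multiset.card_map B.subtype, hz, Multiset.card_map],
    IsCasasAlveroRoots.of_map B.subtype_injective (hz ▸ h.map_mul_sub j⁻¹ a),
    hmem 0 (Multiset.mem_map.2 ⟨a, ha, by simp⟩), hmem 1 (Multiset.mem_map.2 ⟨x, hx, ?_⟩)⟩
  rw [hxj, inv_mul_cancel₀ hj0]
  rfl

def CasasAlveroHolds (K : Type) [Field K] (m : ℕ) : Prop :=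
  ∀ f : K[X], IsCasasAlvero m f → ∃ b : K, f = (Polynomial.X - Polynomial.C b) ^ m

theorem casasAlveroHolds_of_charP {p : ℕ} (hp : p.Prime) {m : ℕ}
    (h : ∀ (Ω : Type) [Field Ω] [IsAlgClosed Ω] [CharP Ω p], CasasAlveroHolds Ω m)
    (K : Type) [Field K] [IsAlgClosed K] [CharZero K] : CasasAlveroHolds K m := by
  intro f hf
  have hsplit := IsAlgClosed.splits f
  have hprod : (f.roots.map fun a => Polynomial.X - Polynomial.C a).prod = f :=
    (hsplit.eq_prod_roots_of_monic hf.1).symm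
  have hcard : Multiset.card f.roots = m := by rw [← hf.2.1, hsplit.natDegree_eq_card_roots]
  have hroots : IsCasasAlveroRoots f.roots :=
    (isCasasAlvero_multiset_prod_iff _).1 (by rwa [hprod, hcard])
  by_contra hpow
  obtain ⟨a, ha, b, hb, hab⟩ := exists_mem_ne_of_multiset_prod_X_sub_C_ne_pow fun c hc =>
    hpow ⟨c, by rw [← hcard, ← hc, hprod]⟩
  obtain ⟨B, hB⟩ := ValuationSubring.exists_natCast_mem_maximalIdeal K hp
  obtain ⟨z, hzcard, hz, hz0, hz1⟩ :=
    hroots.exists_valuationSubring_zero_mem_one_mem ha hb hab B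
  obtain ⟨Ω, _, _, _, ⟨ψ⟩⟩ := IsLocalRing.exists_ringHom_isAlgClosed_charP hp hB
  have hψz := (isCasasAlvero_multiset_prod_iff (z.map ψ)).2 (hz.map ψ)
  rw [Multiset.card_map, hzcard, hcard] at hψz
  obtain ⟨c, hc⟩ := h Ω _ hψz
  rw [← hcard, ← hzcard, ← Multiset.card_map ψ, multiset_prod_X_sub_C_eq_pow_iff] at hc
  exact zero_ne_one <| (map_zero ψ ▸ hc _ (Multiset.mem_map_of_mem ψ hz0)).trans
    (map_one ψ ▸ hc _ (Multiset.mem_map_of_mem ψ hz1)).symm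

theorem Polynomial.expand_contract_of_coeff_eq_zero {R : Type*} {p : ℕ} [CommSemiring R]
    {f : R[X]} (hp : p ≠ 0) (h : ∀ j, ¬ p ∣ j → f.coeff j = 0) :
    expand R p (contract p f) = f := by
  ext n
  rw [coeff_expand hp.bot_lt, coeff_contract hp]
  split_ifs with hn
  · rw [Nat.div_mul_cancel hn]
  · exact (h n hn).symm

section CharP

variable {p : ℕ} [Fact p.Prime]

theorem Nat.cast_choose_eq_zero_of_dvd_of_not_dvd_s13 {R : Type*} [AddMonoidWithOne R] [CharP R p]
    {a b : ℕ} (ha : p ∣ a) (hb : ¬ p ∣ b) : (a.choose b : R) = 0 := by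
  rw [CharP.cast_eq_zero_iff R p, ← Nat.modEq_zero_iff_dvd]
  refine Choose.choose_modEq_choose_mod_mul_choose_div_nat.trans ?_
  rw [Nat.mod_eq_zero_of_dvd ha,
    Nat.choose_eq_zero_of_lt (Nat.pos_of_ne_zero (mt Nat.dvd_of_mod_eq_zero hb)), zero_mul]

theorem Polynomial.hasseDeriv_eq_C_coeff_of_coeff_eq_zero {R : Type*} [CommSemiring R]
    [CharP R p] {f : R[X]} {j : ℕ} (hj : ¬ p ∣ j)
    (h : ∀ k, j < k → ¬ p ∣ k → f.coeff k = 0) : hasseDeriv j f = C (f.coeff j) := by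
  ext (_ | n)
  · simp [hasseDeriv_coeff]
  rw [hasseDeriv_coeff, coeff_C_of_ne_zero n.succ_ne_zero]
  by_cases hpk : p ∣ n + 1 + j
  · rw [Nat.cast_choose_eq_zero_of_dvd_of_not_dvd_s13 hpk hj, zero_mul]
  · rw [h _ (by omega) hpk, mul_zero]

theorem IsCasasAlvero.coeff_eq_zero_of_not_dvd_s13 {K : Type} [Field K] [IsAlgClosed K] [CharP K p]
    {N : ℕ} {f : K[X]} (hf : IsCasasAlvero N f) (hN : p ∣ N) {j : ℕ} (hj : ¬ p ∣ j) :
    f.coeff j = 0 := by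
  obtain ⟨-, hdeg, hroot⟩ := isCasasAlvero_iff_exists_isRoot.1 hf
  induction hd : N - j using Nat.strong_induction_on generalizing j with
  | _ d ih =>
    have hjN : j ≠ N := fun h => hj (h ▸ hN)
    rcases lt_or_gt_of_ne hjN with hlt | hgt
    · have hC := hasseDeriv_eq_C_coeff_of_coeff_eq_zero hj fun k hjk hk =>
        ih (N - k) (by omega) hk rfl
      have hj0 : 0 < j := Nat.pos_of_ne_zero fun h => hj (h ▸ dvd_zero p)
      obtain ⟨β, -, hβ⟩ := hroot j (Finset.mem_Ioo.2 ⟨hj0, hlt⟩)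
      simpa [hC] using hβ
    · exact coeff_eq_zero_of_natDegree_lt (hdeg ▸ hgt)

theorem Polynomial.eval_hasseDeriv_mul_pow_char {R : Type*} [CommRing R] [CharP R p] (u : R[X])
    (k : ℕ) (r : R) : (hasseDeriv (k * p) (u ^ p)).eval r = ((hasseDeriv k u).eval r) ^ p := by
  rw [← taylor_coeff, ← taylor_coeff, taylor_pow, ← map_frobenius_expand, coeff_map,
    coeff_expand_mul (Fact.out : p.Prime).pos, frobenius_def]

end CharP

section AlgClosedCharP

variable {p : ℕ} [Fact p.Prime] {K : Type} [Field K] [IsAlgClosed K] [CharP K p]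

theorem IsCasasAlvero.of_pow_s13 {m : ℕ} {u : K[X]} (h : IsCasasAlvero (m * p) (u ^ p)) :
    IsCasasAlvero m u := by
  have hp : p.Prime := Fact.out
  obtain ⟨hmonic, hdeg, hroot⟩ := isCasasAlvero_iff_exists_isRoot.1 h
  have hu : u.Monic := by
    rw [Monic, leadingCoeff_pow] at hmonic
    exact injective_pow_p K p (hmonic.trans (one_pow p).symm)
  rw [hu.natDegree_pow, mul_comm] at hdeg
  refine isCasasAlvero_iff_exists_isRoot.2
    ⟨hu, Nat.eq_of_mul_eq_mul_right hp.pos hdeg, fun k hk => ?_⟩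
  rw [Finset.mem_Ioo] at hk
  obtain ⟨β, hβ, hHβ⟩ := hroot (k * p) (Finset.mem_Ioo.2
    ⟨Nat.mul_pos hk.1 hp.pos, Nat.mul_lt_mul_of_pos_right hk.2 hp.pos⟩)
  rw [IsRoot.def, Polynomial.eval_pow] at hβ
  rw [IsRoot.def, eval_hasseDeriv_mul_pow_char] at hHβ
  exact ⟨β, pow_eq_zero_iff hp.ne_zero |>.1 hβ, pow_eq_zero_iff hp.ne_zero |>.1 hHβ⟩

theorem IsCasasAlvero.exists_eq_pow_s13 {m : ℕ} {f : K[X]} (hf : IsCasasAlvero (m * p) f) :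
    ∃ u : K[X], IsCasasAlvero m u ∧ f = u ^ p := by
  have hf' : f = ((contract p f).map (frobeniusEquiv K p).symm) ^ p := by
    rw [← polynomial_expand_eq, expand_contract_of_coeff_eq_zero (Fact.out : p.Prime).ne_zero
      fun j hj => hf.coeff_eq_zero_of_not_dvd_s13 (dvd_mul_left p m) hj]
  exact ⟨_, IsCasasAlvero.of_pow_s13 (hf' ▸ hf), hf'⟩

theorem CasasAlveroHolds.mul_char {m : ℕ} (h : CasasAlveroHolds K m) :
    CasasAlveroHolds K (m * p) := by
  intro f hf
  obtain ⟨u, hu, rfl⟩ := hf.exists_eq_pow_s13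
  obtain ⟨b, rfl⟩ := h u hu
  exact ⟨b, by rw [← pow_mul]⟩

theorem CasasAlveroHolds.mul_pow_char {m : ℕ} (h : CasasAlveroHolds K m) (ℓ : ℕ) :
    CasasAlveroHolds K (m * p ^ ℓ) := by
  induction ℓ with
  | zero => simpa using h
  | succ ℓ ih => rw [pow_succ, ← mul_assoc]; exact ih.mul_char

end AlgClosedCharP

theorem CA_np_pow_char_zero_general (n : ℕ) (p : ℕ) (hp : p.Prime) (ℓ : ℕ)
    (h : ∀ (K : Type) [Field K] [IsAlgClosed K] [CharP K p],
      ∀ f : Polynomial K, IsCasasAlvero n f →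
        ∃ b : K, f = (Polynomial.X - Polynomial.C b) ^ n) :
    ∀ (K : Type) [Field K] [IsAlgClosed K] [CharP K 0],
      ∀ f : Polynomial K, IsCasasAlvero (n * p ^ ℓ) f →
        ∃ b : K, f = (Polynomial.X - Polynomial.C b) ^ (n * p ^ ℓ) := by
  have : Fact p.Prime := ⟨hp⟩
  intro K _ _ _
  have : CharZero K := CharP.charP_to_charZero K
  exact casasAlveroHolds_of_charP hp (fun Ω _ _ _ => CasasAlveroHolds.mul_pow_char (h Ω) ℓ) K

/-- If `CA_{n,p}` holds then so does `CA_{n·p^ℓ, 0}`. -/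
theorem CA_np_pow_char_zero (n : ℕ) (hn : 0 < n) (p : ℕ) (hp : p.Prime) (ℓ : ℕ)
    (h : ∀ (K : Type) [Field K] [IsAlgClosed K] [CharP K p],
      ∀ f : Polynomial K, IsCasasAlvero n f →
        ∃ b : K, f = (Polynomial.X - Polynomial.C b) ^ n) :
    ∀ (K : Type) [Field K] [IsAlgClosed K] [CharP K 0],
      ∀ f : Polynomial K, IsCasasAlvero (n * p ^ ℓ) f →
        ∃ b : K, f = (Polynomial.X - Polynomial.C b) ^ (n * p ^ ℓ) :=
  CA_np_pow_char_zero_general n p hp ℓ h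
end
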